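/- arXiv:1210.1243 — 3 statements merged into one kernel-verified Lean document; each statement's English description precedes it below -/
import Mathlib

section
/- Let H be holomorphic on the strip {−ε < Re(s) < 1+ε} with H(0)=0, H(1)=1 and polynomial growth, and suppose s ↦ H(s)E*_s(z) is holomorphic there except for a simple pole at s=1 of residue 1 and decays rapidly in vertical strips. Then for 0 < δ < ε, 1 = ∫_{Re(s)=1+δ} ( H(s) − H(1−s) ) E*_s(z) ds/(2πi), using the functional equation E*_s = E*_{1−s}. -/
/-!
Write `f s = H s * E*_s`. By the functional equation the integrand is `f s - f (1 - s)`, so the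
integral is the difference of the integrals of `f` over the lines `Re s = 1 + δ` and
`Re s = -δ`, i.e. `2π` times the residue `1` at `s = 1`. To see this, write
`f = g + 1 / (s - 1)` with `g` holomorphic and truncate at height `T`: Cauchy's theorem on the
rectangle reduces the `g`-part to the two horizontal edges, which vanish as `T → ∞` because `g`
decays like `1 / |Im s|`, while the pole part is `2 arctan (T / (1 + δ)) + 2 arctan (T / δ) → 2π`.
-/

open Complex Real MeasureTheory Set Filter Topology

theorem intervalIntegral_symm_eq_zero_of_odd {φ : ℝ → ℝ} (hφ : φ.Odd) (T : ℝ) :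
    ∫ t in -T..T, φ t = 0 := by
  have h := intervalIntegral.integral_comp_neg (a := -T) (b := T) φ
  simp only [neg_neg, show ∀ t, φ (-t) = -φ t from hφ, intervalIntegral.integral_neg] at h
  linarith

theorem integral_inv_ofReal_add_mul_I {a : ℝ} (ha : a ≠ 0) (T : ℝ) :
    ∫ t in -T..T, ((a : ℂ) + t * I)⁻¹ = ((2 * Real.arctan (T / a) : ℝ) : ℂ) := by
  have hpos : ∀ t : ℝ, a ^ 2 + t ^ 2 ≠ 0 := fun t => by positivity
  have hsplit : ∀ t : ℝ, ((a : ℂ) + t * I)⁻¹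
      = ((a / (a ^ 2 + t ^ 2) : ℝ) : ℂ) - ((t / (a ^ 2 + t ^ 2) : ℝ) : ℂ) * I := fun t => by
    apply Complex.ext <;>
      simp only [inv_re, inv_im, normSq_apply, add_re, add_im, sub_re, sub_im, mul_re, mul_im,
        ofReal_re, ofReal_im, I_re, I_im, mul_zero, mul_one, sub_self, sub_zero, zero_sub,
        add_zero, zero_add] <;>
      ring
  have hodd : (fun t : ℝ => t / (a ^ 2 + t ^ 2)).Odd := fun t => by simp [neg_div]
  simp_rw [hsplit]
  rw [intervalIntegral.integral_sub, intervalIntegral.integral_mul_const,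
    intervalIntegral.integral_ofReal, intervalIntegral.integral_ofReal, integral_div_sq_add_sq,
    intervalIntegral_symm_eq_zero_of_odd hodd, neg_div, Real.arctan_neg]
  · push_cast; ring
  · exact Continuous.intervalIntegrable (by fun_prop (disch := exact hpos _)) _ _
  · exact Continuous.intervalIntegrable (by fun_prop (disch := exact hpos _)) _ _

theorem tendsto_arctan_div_atTop {a : ℝ} (ha : 0 < a) :
    Tendsto (fun T => Real.arctan (T / a)) atTop (𝓝 (π / 2)) :=
  (tendsto_nhds_of_tendsto_nhdsWithin tendsto_arctan_atTop).comp (tendsto_id.atTop_div_const ha)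

theorem continuous_inv_ofReal_add_mul_I {a : ℝ} (ha : a ≠ 0) :
    Continuous fun t : ℝ => ((a : ℂ) + t * I)⁻¹ :=
  (by fun_prop : Continuous fun t : ℝ => (a : ℂ) + t * I).inv₀ fun t h => ha (by
    simpa using congrArg re h)

theorem tendsto_integral_inv_sub_inv {a b : ℝ} (ha : a < 0) (hb : 0 < b) :
    Tendsto (fun T : ℝ => (∫ t in -T..T, ((b : ℂ) + t * I)⁻¹) - ∫ t in -T..T, ((a : ℂ) + t * I)⁻¹)
      atTop (𝓝 (2 * π)) := by
  simp_rw [integral_inv_ofReal_add_mul_I hb.ne', integral_inv_ofReal_add_mul_I ha.ne,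
    ← ofReal_sub]
  have h := ((tendsto_arctan_div_atTop hb).add
    (tendsto_arctan_div_atTop (neg_pos.2 ha))).const_mul 2
  rw [show 2 * (π / 2 + π / 2) = 2 * π by ring] at h
  rw [← ofReal_ofNat, ← ofReal_mul]
  refine (continuous_ofReal.tendsto _).comp (h.congr fun T => ?_)
  rw [div_neg, Real.arctan_neg]
  ring

theorem integrable_of_norm_le_one_add_abs_rpow {E : Type*} [NormedAddCommGroup E]
    {φ : ℝ → E} {A C : ℝ} (hφ : Continuous φ) (hA : 1 < A)
    (h : ∀ t, 1 ≤ |t| → ‖φ t‖ ≤ C * (1 + |t|) ^ (-A)) : Integrable φ := by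
  refine hφ.locallyIntegrable.integrable_of_isBigO_cocompact (g := fun t => (1 + ‖t‖) ^ (-A))
    (Asymptotics.IsBigO.of_bound C ?_)
    ((integrable_one_add_norm (by simpa using hA)).integrableAtFilter _)
  filter_upwards [tendsto_norm_cocompact_atTop.eventually_ge_atTop 1] with t ht
  rw [Real.norm_of_nonneg (by positivity)]
  exact h t ht

theorem norm_integral_horizontal_le {g : ℂ → ℂ} {σ₁ σ₂ : ℝ} {B : ℝ → ℝ} (hσ : σ₁ ≤ σ₂)
    (hgB : ∀ s : ℂ, s.re ∈ Icc σ₁ σ₂ → 1 ≤ |s.im| → ‖g s‖ ≤ B |s.im|) {T : ℝ} (hT : 1 ≤ |T|) :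
    ‖∫ x in σ₁..σ₂, g (x + T * I)‖ ≤ B |T| * (σ₂ - σ₁) := by
  refine (intervalIntegral.norm_integral_le_of_norm_le_const fun x hx => ?_).trans_eq
    (by rw [abs_of_nonneg (sub_nonneg.2 hσ)])
  rw [uIoc_of_le hσ] at hx
  simpa using hgB (x + T * I) (by simpa using Ioc_subset_Icc_self hx) (by simpa using hT)

theorem tendsto_integral_vertical_sub_of_norm_le {g : ℂ → ℂ} {σ₁ σ₂ : ℝ} {B : ℝ → ℝ}
    (hσ : σ₁ ≤ σ₂) (hg : DifferentiableOn ℂ g (re ⁻¹' Icc σ₁ σ₂)) (hB : Tendsto B atTop (𝓝 0))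
    (hgB : ∀ s : ℂ, s.re ∈ Icc σ₁ σ₂ → 1 ≤ |s.im| → ‖g s‖ ≤ B |s.im|) :
    Tendsto (fun T : ℝ => (∫ t in -T..T, g (σ₂ + t * I)) - ∫ t in -T..T, g (σ₁ + t * I))
      atTop (𝓝 0) := by
  have hcauchy : ∀ T : ℝ, I * ((∫ t in -T..T, g (σ₂ + t * I)) - ∫ t in -T..T, g (σ₁ + t * I))
      = (∫ x in σ₁..σ₂, g (x + T * I)) - ∫ x in σ₁..σ₂, g (x + (-T : ℝ) * I) := fun T => by
    have h := Complex.integral_boundary_rect_eq_zero_of_differentiableOn g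
      (σ₁ + (-T : ℝ) * I) (σ₂ + T * I) (hg.mono fun s hs => by
        simpa [uIcc_of_le hσ] using (mem_reProdIm.1 hs).1)
    simp only [add_re, ofReal_re, mul_re, I_re, I_im, ofReal_im, add_im, mul_im, smul_eq_mul,
      mul_zero, sub_zero, add_zero, mul_one, zero_add] at h
    linear_combination h
  have hbound : ∀ T : ℝ, 1 ≤ T →
      ‖(∫ t in -T..T, g (σ₂ + t * I)) - ∫ t in -T..T, g (σ₁ + t * I)‖
        ≤ 2 * (B T * (σ₂ - σ₁)) := fun T hT => by
    have hT' : 1 ≤ |T| := hT.trans (le_abs_self T)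
    calc _ = ‖(∫ x in σ₁..σ₂, g (x + T * I)) - ∫ x in σ₁..σ₂, g (x + (-T : ℝ) * I)‖ := by
          rw [← hcauchy, norm_mul, norm_I, one_mul]
      _ ≤ B |T| * (σ₂ - σ₁) + B |-T| * (σ₂ - σ₁) :=
          norm_sub_le_of_le (norm_integral_horizontal_le hσ hgB hT')
            (norm_integral_horizontal_le hσ hgB (by rwa [abs_neg]))
      _ = 2 * (B T * (σ₂ - σ₁)) := by rw [abs_neg, abs_of_nonneg (by linarith)]; ring
  refine squeeze_zero_norm' (eventually_atTop.2 ⟨1, hbound⟩) ?_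
  simpa using (hB.mul_const (σ₂ - σ₁)).const_mul 2

section SimplePole

variable {f g : ℂ → ℂ} {σ₁ σ₂ p A C : ℝ} {c : ℂ}

theorem eq_add_inv_of_eq_add_div
    (hfg : ∀ s : ℂ, s.re ∈ Icc σ₁ σ₂ → s ≠ p → f s = g s + c / (s - p))
    {σ : ℝ} (hσ : σ ∈ Icc σ₁ σ₂) (hσp : σ ≠ p) (t : ℝ) :
    f (σ + t * I) = g (σ + t * I) + c * (((σ - p : ℝ) : ℂ) + t * I)⁻¹ := by
  rw [hfg _ (by simpa using hσ) fun h => hσp (by simpa using congrArg re h), div_eq_mul_inv]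
  push_cast
  ring_nf

theorem continuous_vertical (hg : DifferentiableOn ℂ g (re ⁻¹' Icc σ₁ σ₂)) {σ : ℝ}
    (hσ : σ ∈ Icc σ₁ σ₂) : Continuous fun t : ℝ => g (σ + t * I) :=
  hg.continuousOn.comp_continuous (by fun_prop) fun t => by simpa using hσ

theorem intervalIntegral_vertical_eq_add (hg : DifferentiableOn ℂ g (re ⁻¹' Icc σ₁ σ₂))
    (hfg : ∀ s : ℂ, s.re ∈ Icc σ₁ σ₂ → s ≠ p → f s = g s + c / (s - p))
    {σ : ℝ} (hσ : σ ∈ Icc σ₁ σ₂) (hσp : σ ≠ p) (T : ℝ) :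
    ∫ t in -T..T, f (σ + t * I)
      = (∫ t in -T..T, g (σ + t * I)) + c * ∫ t in -T..T, (((σ - p : ℝ) : ℂ) + t * I)⁻¹ := by
  simp_rw [eq_add_inv_of_eq_add_div hfg hσ hσp]
  rw [intervalIntegral.integral_add ((continuous_vertical hg hσ).intervalIntegrable _ _)
    (((continuous_inv_ofReal_add_mul_I (sub_ne_zero.2 hσp)).const_mul c).intervalIntegrable _ _),
    intervalIntegral.integral_const_mul]

theorem integrable_vertical_of_eq_add_div (hA : 1 < A)
    (hg : DifferentiableOn ℂ g (re ⁻¹' Icc σ₁ σ₂))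
    (hfg : ∀ s : ℂ, s.re ∈ Icc σ₁ σ₂ → s ≠ p → f s = g s + c / (s - p))
    (hf : ∀ s : ℂ, s.re ∈ Icc σ₁ σ₂ → 1 ≤ |s.im| → ‖f s‖ ≤ C * (1 + |s.im|) ^ (-A))
    {σ : ℝ} (hσ : σ ∈ Icc σ₁ σ₂) (hσp : σ ≠ p) : Integrable fun t : ℝ => f (σ + t * I) := by
  have hcont : Continuous fun t : ℝ => f (σ + t * I) :=
    ((continuous_vertical hg hσ).add ((continuous_inv_ofReal_add_mul_I
      (sub_ne_zero.2 hσp)).const_mul c)).congr fun t => (eq_add_inv_of_eq_add_div hfg hσ hσp t).symm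
  exact integrable_of_norm_le_one_add_abs_rpow hcont hA
    fun t ht => by simpa using hf (σ + t * I) (by simpa using hσ) (by simpa using ht)

theorem norm_le_of_eq_add_div
    (hfg : ∀ s : ℂ, s.re ∈ Icc σ₁ σ₂ → s ≠ p → f s = g s + c / (s - p))
    (hf : ∀ s : ℂ, s.re ∈ Icc σ₁ σ₂ → 1 ≤ |s.im| → ‖f s‖ ≤ C * (1 + |s.im|) ^ (-A))
    (s : ℂ) (hs : s.re ∈ Icc σ₁ σ₂) (him : 1 ≤ |s.im|) :
    ‖g s‖ ≤ C * (1 + |s.im|) ^ (-A) + ‖c‖ * |s.im|⁻¹ := by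
  have him_le : |s.im| ≤ ‖s - p‖ := by simpa using abs_im_le_norm (s - p)
  have hsp : s ≠ p := fun h => by norm_num [h] at him
  calc ‖g s‖ = ‖f s - c / (s - p)‖ := by rw [hfg s hs hsp, add_sub_cancel_right]
    _ ≤ ‖f s‖ + ‖c‖ * ‖s - p‖⁻¹ := by
        rw [← norm_inv, ← norm_mul, ← div_eq_mul_inv]; exact norm_sub_le _ _
    _ ≤ _ := add_le_add (hf s hs him)
        (mul_le_mul_of_nonneg_left (inv_anti₀ (by linarith) him_le) (norm_nonneg c))

theorem integral_vertical_sub_eq_two_pi_mul_residue (h₁ : σ₁ < p) (h₂ : p < σ₂) (hA : 1 < A)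
    (hg : DifferentiableOn ℂ g (re ⁻¹' Icc σ₁ σ₂))
    (hfg : ∀ s : ℂ, s.re ∈ Icc σ₁ σ₂ → s ≠ p → f s = g s + c / (s - p))
    (hf : ∀ s : ℂ, s.re ∈ Icc σ₁ σ₂ → 1 ≤ |s.im| → ‖f s‖ ≤ C * (1 + |s.im|) ^ (-A)) :
    (∫ t : ℝ, f (σ₂ + t * I)) - ∫ t : ℝ, f (σ₁ + t * I) = 2 * π * c := by
  have hσ₁ : σ₁ ∈ Icc σ₁ σ₂ := ⟨le_rfl, by linarith⟩
  have hσ₂ : σ₂ ∈ Icc σ₁ σ₂ := ⟨by linarith, le_rfl⟩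
  have hB : Tendsto (fun u : ℝ => C * (1 + u) ^ (-A) + ‖c‖ * u⁻¹) atTop (𝓝 0) := by
    simpa using ((tendsto_rpow_neg_atTop (by linarith)).comp
      (tendsto_atTop_add_const_left atTop 1 tendsto_id)).const_mul C |>.add
      (tendsto_inv_atTop_zero.const_mul ‖c‖)
  have hrect := tendsto_integral_vertical_sub_of_norm_le (by linarith) hg hB
    (norm_le_of_eq_add_div hfg hf)
  have hpole := (tendsto_integral_inv_sub_inv (sub_neg.2 h₁) (sub_pos.2 h₂)).const_mul c
  have htrunc : Tendsto (fun T : ℝ => (∫ t in -T..T, f (σ₂ + t * I)) - ∫ t in -T..T, f (σ₁ + t * I))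
      atTop (𝓝 (0 + c * (2 * π))) := (hrect.add hpole).congr fun T => by
    rw [intervalIntegral_vertical_eq_add hg hfg hσ₂ h₂.ne',
      intervalIntegral_vertical_eq_add hg hfg hσ₁ h₁.ne]
    ring
  have hlim : ∀ σ ∈ Icc σ₁ σ₂, σ ≠ p → Tendsto (fun T : ℝ => ∫ t in -T..T, f (σ + t * I))
      atTop (𝓝 (∫ t : ℝ, f (σ + t * I))) := fun σ hσ hσp =>
    intervalIntegral_tendsto_integral (integrable_vertical_of_eq_add_div hA hg hfg hf hσ hσp)
      tendsto_neg_atTop_atBot tendsto_id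
  have hfull := (hlim σ₂ hσ₂ h₂.ne').sub (hlim σ₁ hσ₁ h₁.ne)
  rw [tendsto_nhds_unique hfull htrunc]
  ring

end SimplePole

theorem residue_contour_identity_general (ε δ : ℝ) (hδ : 0 < δ) (hδε : δ < ε)
    (H Estar : ℂ → ℂ)
    (hfe : ∀ s : ℂ, Estar s = Estar (1 - s))
    (hpole : ∃ g : ℂ → ℂ, DifferentiableOn ℂ g {s : ℂ | -ε < s.re ∧ s.re < 1 + ε} ∧
      ∀ s : ℂ, -ε < s.re → s.re < 1 + ε → s ≠ 1 → H s * Estar s = g s + 1 / (s - 1))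
    (hdecay : ∀ A : ℝ, ∃ C : ℝ, ∀ s : ℂ, -ε < s.re → s.re < 1 + ε → 1 ≤ |s.im| →
      ‖H s * Estar s‖ ≤ C * (1 + |s.im|) ^ (-A)) :
    1 = ((1 / (2 * Real.pi) : ℝ) : ℂ) *
      ∫ t : ℝ, (H (1 + δ + t * Complex.I) - H (1 - (1 + δ + t * Complex.I))) *
        Estar (1 + δ + t * Complex.I) := by
  obtain ⟨g, hg, hgH⟩ := hpole
  obtain ⟨C, hC⟩ := hdecay 2
  have hstrip : ∀ s : ℂ, s.re ∈ Icc (-δ) (1 + δ) → -ε < s.re ∧ s.re < 1 + ε :=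
    fun s hs => ⟨by linarith [hs.1], by linarith [hs.2]⟩
  have hg' : DifferentiableOn ℂ g (re ⁻¹' Icc (-δ) (1 + δ)) := hg.mono hstrip
  have hfg : ∀ s : ℂ, s.re ∈ Icc (-δ) (1 + δ) → s ≠ (1 : ℝ) →
      H s * Estar s = g s + 1 / (s - (1 : ℝ)) := fun s hs hs1 => by
    simpa using hgH s (hstrip s hs).1 (hstrip s hs).2 (by simpa using hs1)
  have hf := fun s hs => hC s (hstrip s hs).1 (hstrip s hs).2
  have hres := integral_vertical_sub_eq_two_pi_mul_residue (by linarith) (by linarith) one_lt_two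
    hg' hfg hf
  have hint := fun σ => integrable_vertical_of_eq_add_div (σ := σ) one_lt_two hg' hfg hf
  have hintegrand : ∀ t : ℝ,
      (H (1 + δ + t * I) - H (1 - (1 + δ + t * I))) * Estar (1 + δ + t * I)
        = H ((1 + δ : ℝ) + t * I) * Estar ((1 + δ : ℝ) + t * I)
          - H ((-δ : ℝ) + (-t : ℝ) * I) * Estar ((-δ : ℝ) + (-t : ℝ) * I) := fun t => by
    rw [show ((-δ : ℝ) : ℂ) + (-t : ℝ) * I = 1 - (1 + δ + t * I) by push_cast; ring,
      show ((1 + δ : ℝ) : ℂ) + t * I = 1 + δ + t * I by push_cast; ring, sub_mul, ← hfe]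
  have hreflect := integral_neg_eq_self
    (fun t : ℝ => H ((-δ : ℝ) + t * I) * Estar ((-δ : ℝ) + t * I)) volume
  simp_rw [hintegrand]
  rw [integral_sub (hint _ ⟨by linarith, le_rfl⟩ (by linarith))
    ((hint _ ⟨le_rfl, by linarith⟩ (by linarith)).comp_neg), hreflect, hres]
  push_cast
  field_simp

/-- Let `Estar` be (the value at a fixed point `z` of) the completed Eisenstein series
`s ↦ E*_s(z)`, satisfying the functional equation `E*_s = E*_{1-s}`.  Let `H` be
holomorphic on the strip `{-ε < Re s < 1 + ε}` with `H(0) = 0`, `H(1) = 1` and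
polynomial growth, and suppose `s ↦ H(s)E*_s` is holomorphic on the strip except
for a simple pole at `s = 1` of residue `1`, and decays rapidly in vertical strips.
Then for `0 < δ < ε` we have `1 = ∫_{Re s = 1+δ} (H(s) - H(1-s)) E*_s ds/(2πi)`. -/
theorem residue_contour_identity (ε δ : ℝ) (hε : 0 < ε) (hδ : 0 < δ) (hδε : δ < ε)
    (H Estar : ℂ → ℂ)
    (hH : DifferentiableOn ℂ H {s : ℂ | -ε < s.re ∧ s.re < 1 + ε})
    (hH0 : H 0 = 0) (hH1 : H 1 = 1)
    (hHgrow : ∃ C : ℝ, ∃ n : ℕ, ∀ s : ℂ, -ε < s.re → s.re < 1 + ε →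
      ‖H s‖ ≤ C * (1 + ‖s‖) ^ n)
    (hfe : ∀ s : ℂ, Estar s = Estar (1 - s))
    (hpole : ∃ g : ℂ → ℂ, DifferentiableOn ℂ g {s : ℂ | -ε < s.re ∧ s.re < 1 + ε} ∧
      ∀ s : ℂ, -ε < s.re → s.re < 1 + ε → s ≠ 1 → H s * Estar s = g s + 1 / (s - 1))
    (hdecay : ∀ A : ℝ, ∃ C : ℝ, ∀ s : ℂ, -ε < s.re → s.re < 1 + ε → 1 ≤ |s.im| →
      ‖H s * Estar s‖ ≤ C * (1 + |s.im|) ^ (-A)) :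
    1 = ((1 / (2 * Real.pi) : ℝ) : ℂ) *
      ∫ t : ℝ, (H (1 + δ + t * Complex.I) - H (1 - (1 + δ + t * Complex.I))) *
        Estar (1 + δ + t * Complex.I) :=
  residue_contour_identity_general ε δ hδ hδε H Estar hfe hpole hdecay
end

section
/- Let M be a squarefree positive integer and Γ = Γ₀(M). As d ranges over the positive divisors of M and j over a set of representatives of ℤ/d, the matrices τ_d · n(j) (with n(j) = [[1,j],[0,1]] and τ_d as above) form a complete set of representatives for the right cosets Γ \\ SL₂(ℤ). -/
open Matrix CongruenceSubgroup
open scoped MatrixGroups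

/-- `τ` is congruent to `[[0,1],[-1,0]]` entrywise mod `d`. -/
def CongW (τ : SL(2, ℤ)) (d : ℕ) : Prop :=
  ((τ : Matrix (Fin 2) (Fin 2) ℤ) 0 0 ≡ 0 [ZMOD (d : ℤ)]) ∧
  ((τ : Matrix (Fin 2) (Fin 2) ℤ) 0 1 ≡ 1 [ZMOD (d : ℤ)]) ∧
  ((τ : Matrix (Fin 2) (Fin 2) ℤ) 1 0 ≡ -1 [ZMOD (d : ℤ)]) ∧
  ((τ : Matrix (Fin 2) (Fin 2) ℤ) 1 1 ≡ 0 [ZMOD (d : ℤ)])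

/-- `τ` is congruent to the identity entrywise mod `m`. -/
def CongId (τ : SL(2, ℤ)) (m : ℕ) : Prop :=
  ((τ : Matrix (Fin 2) (Fin 2) ℤ) 0 0 ≡ 1 [ZMOD (m : ℤ)]) ∧
  ((τ : Matrix (Fin 2) (Fin 2) ℤ) 0 1 ≡ 0 [ZMOD (m : ℤ)]) ∧
  ((τ : Matrix (Fin 2) (Fin 2) ℤ) 1 0 ≡ 0 [ZMOD (m : ℤ)]) ∧
  ((τ : Matrix (Fin 2) (Fin 2) ℤ) 1 1 ≡ 1 [ZMOD (m : ℤ)])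

/-- The unipotent matrix `n(j) = [[1, j],[0, 1]]` in `SL₂(ℤ)`. -/
def upperUnip (j : ℕ) : SL(2, ℤ) :=
  ⟨!![1, (j : ℤ); 0, 1], by simp [Matrix.det_fin_two_of]⟩

/-!
Membership of `g * (τ_d n(j))⁻¹` in `Γ₀(M)` depends only on the bottom-left entry, which by
the congruences defining `τ_d` and the Chinese remainder theorem for `M = d · (M/d)` reduces to
`e ≡ j c (mod d)` and `c ≡ 0 (mod M/d)`, where `(c, e)` is the bottom row of `g`. Since `c` and
`e` are coprime, the first condition forces `gcd(c, d) = 1`, and then the second says exactly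
that `gcd(c, M) = M/d`; so `d = M / gcd(c, M)` is determined by `g`. Conversely this `d` is
coprime to `c` because `M` is squarefree, and `j` is the unique residue of `e c⁻¹` mod `d`.
-/

lemma SL2_mul_inv_apply_one_zero {R : Type*} [CommRing R] (g h : SL(2, R)) :
    (g * h⁻¹) 1 0 = g 1 0 * h 1 1 - g 1 1 * h 1 0 := by
  change ((g : Matrix (Fin 2) (Fin 2) R) * (h⁻¹ : SL(2, R))) 1 0 = _
  simp [adjugate_fin_two, mul_apply, Fin.sum_univ_two]
  ring

lemma mul_upperUnip_apply_one_zero (τ : SL(2, ℤ)) (j : ℕ) : (τ * upperUnip j) 1 0 = τ 1 0 := by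
  change ((τ : Matrix (Fin 2) (Fin 2) ℤ) * upperUnip j) 1 0 = _
  simp [upperUnip, mul_apply, Fin.sum_univ_two]

lemma mul_upperUnip_apply_one_one (τ : SL(2, ℤ)) (j : ℕ) :
    (τ * upperUnip j) 1 1 = τ 1 0 * j + τ 1 1 := by
  change ((τ : Matrix (Fin 2) (Fin 2) ℤ) * upperUnip j) 1 1 = _
  simp [upperUnip, mul_apply, Fin.sum_univ_two]

lemma mul_inv_mem_Gamma0_iff {d m : ℕ} (hdm : d.Coprime m) {τ : SL(2, ℤ)} (hW : CongW τ d)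
    (hI : CongId τ m) (g : SL(2, ℤ)) (j : ℕ) :
    g * (τ * upperUnip j)⁻¹ ∈ Gamma0 (d * m) ↔
      (d : ℤ) ∣ g 1 1 - j * g 1 0 ∧ (m : ℤ) ∣ g 1 0 := by
  have hx : (g * (τ * upperUnip j)⁻¹) 1 0 = g 1 0 * (τ 1 0 * j + τ 1 1) - g 1 1 * τ 1 0 := by
    rw [SL2_mul_inv_apply_one_zero, mul_upperUnip_apply_one_zero, mul_upperUnip_apply_one_one]
  obtain ⟨-, -, hγd, hδd⟩ := hW
  obtain ⟨-, -, hγm, hδm⟩ := hI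
  have hxd : g 1 0 * (τ 1 0 * j + τ 1 1) - g 1 1 * τ 1 0 ≡ g 1 1 - j * g 1 0 [ZMOD d] :=
    calc _ ≡ g 1 0 * (-1 * j + 0) - g 1 1 * -1 [ZMOD d] := by gcongr
      _ = g 1 1 - j * g 1 0 := by ring
  have hxm : g 1 0 * (τ 1 0 * j + τ 1 1) - g 1 1 * τ 1 0 ≡ g 1 0 [ZMOD m] :=
    calc _ ≡ g 1 0 * (0 * j + 1) - g 1 1 * 0 [ZMOD m] := by gcongr
      _ = g 1 0 := by ring
  rw [Gamma0_mem, hx, ZMod.intCast_zmod_eq_zero_iff_dvd, ← hxd.dvd_iff, ← hxm.dvd_iff,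
    Nat.cast_mul]
  exact ⟨fun h => ⟨dvd_of_mul_right_dvd h, dvd_of_mul_left_dvd h⟩,
    fun ⟨hd, hm⟩ => (Nat.isCoprime_iff_coprime.2 hdm).mul_dvd hd hm⟩

lemma IsCoprime.of_dvd_sub_mul {c e k : ℤ} (hce : IsCoprime c e) (j : ℤ) (hk : k ∣ e - j * c) :
    IsCoprime c k := by
  have h := hce.add_mul_left_right (-j)
  rw [show e + c * -j = e - j * c by ring] at h
  exact h.of_isCoprime_of_dvd_right hk

lemma existsUnique_lt_dvd_sub_mul {c : ℤ} {d : ℕ} (hd : 0 < d) (hcd : IsCoprime c d) (e : ℤ) :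
    ∃! j : ℕ, j < d ∧ (d : ℤ) ∣ e - j * c := by
  have : NeZero d := ⟨hd.ne'⟩
  set u := ZMod.unitOfIsCoprime c hcd
  have key : ∀ j : ℕ, (d : ℤ) ∣ e - j * c ↔ (j : ZMod d) = e * ↑u⁻¹ := by
    intro j
    rw [← ZMod.intCast_zmod_eq_zero_iff_dvd, Units.eq_mul_inv_iff_mul_eq,
      ZMod.coe_unitOfIsCoprime]
    push_cast
    exact sub_eq_zero.trans eq_comm
  refine ⟨(e * ↑u⁻¹ : ZMod d).val, ⟨ZMod.val_lt _, by rw [key, ZMod.natCast_zmod_val]⟩, ?_⟩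
  rintro j ⟨hj, hjd⟩
  rw [← (key j).1 hjd, ZMod.val_cast_of_lt hj]

lemma Int.gcd_mul_eq_of_isCoprime_of_dvd {c : ℤ} {d m : ℕ} (hcd : IsCoprime c d)
    (hmc : (m : ℤ) ∣ c) : Int.gcd c (d * m : ℕ) = m := by
  rw [Int.isCoprime_iff_nat_coprime, Int.natAbs_natCast] at hcd
  rw [Int.gcd_eq_natAbs, Int.natAbs_natCast, hcd.symm.gcd_mul_left_cancel_right,
    Nat.gcd_eq_right (Int.natCast_dvd.1 hmc)]

lemma eq_div_gcd_of_isCoprime {c : ℤ} {M d : ℕ} (hM : 0 < M) (hd : d ∣ M) (hcd : IsCoprime c d)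
    (hc : ((M / d : ℕ) : ℤ) ∣ c) : d = M / Int.gcd c M := by
  have hM' := Nat.mul_div_cancel' hd
  rw [← hM', Int.gcd_mul_eq_of_isCoprime_of_dvd hcd hc, hM', Nat.div_div_self hd hM.ne']

lemma isCoprime_div_gcd_of_squarefree {M : ℕ} (hsq : Squarefree M) (c : ℤ) :
    IsCoprime c (M / Int.gcd c M : ℕ) := by
  rw [Int.isCoprime_iff_nat_coprime, Int.natAbs_natCast, Int.gcd_eq_natAbs, Int.natAbs_natCast]
  set G := c.natAbs.gcd M
  have hG : 0 < G := Nat.gcd_pos_of_pos_right _ (Nat.pos_of_ne_zero hsq.ne_zero)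
  have hMG : (M / G).Coprime G :=
    Nat.coprime_of_squarefree_mul (by rwa [Nat.div_mul_cancel (Nat.gcd_dvd_right _ _)])
  have hcG : (c.natAbs / G).Coprime (M / G) := Nat.coprime_div_gcd_div_gcd hG
  have := hcG.symm.mul_right hMG
  rwa [Nat.div_mul_cancel (Nat.gcd_dvd_left _ _), Nat.coprime_comm] at this

lemma existsUnique_divisor_residue {M : ℕ} (hsq : Squarefree M) {c e : ℤ}
    (hce : IsCoprime c e) :
    ∃! p : ℕ × ℕ, p.1 ∣ M ∧ p.2 < p.1 ∧ (p.1 : ℤ) ∣ e - p.2 * c ∧ ((M / p.1 : ℕ) : ℤ) ∣ c := by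
  have hM : 0 < M := Nat.pos_of_ne_zero hsq.ne_zero
  set G := Int.gcd c M
  have hGM : G ∣ M := Int.natCast_dvd_natCast.1 (Int.gcd_dvd_right c M)
  have hd : 0 < M / G := Nat.div_pos (Nat.le_of_dvd hM hGM) (Nat.pos_of_dvd_of_pos hGM hM)
  obtain ⟨j, ⟨hj, hjd⟩, hj_uniq⟩ :=
    existsUnique_lt_dvd_sub_mul hd (isCoprime_div_gcd_of_squarefree hsq c) e
  refine ⟨(M / G, j), ⟨Nat.div_dvd_of_dvd hGM, hj, hjd, ?_⟩, ?_⟩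
  · rw [Nat.div_div_self hGM hM.ne']
    exact Int.gcd_dvd_left c M
  · rintro ⟨d₁, j₁⟩ ⟨hd₁, hj₁, hj₁d, hc₁⟩
    obtain rfl : d₁ = M / G := eq_div_gcd_of_isCoprime hM hd₁ (hce.of_dvd_sub_mul j₁ hj₁d) hc₁
    rw [hj_uniq j₁ ⟨hj₁, hj₁d⟩]

theorem gamma0_coset_reps_general (M : ℕ) (hsq : Squarefree M)
    (τ : ℕ → SL(2, ℤ)) (hτ : ∀ d : ℕ, d ∣ M → CongW (τ d) d ∧ CongId (τ d) (M / d)) :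
    ∀ g : SL(2, ℤ), ∃! p : ℕ × ℕ,
      p.1 ∣ M ∧ p.2 < p.1 ∧ g * (τ p.1 * upperUnip p.2)⁻¹ ∈ Gamma0 M := by
  intro g
  have hmem : ∀ p : ℕ × ℕ, p.1 ∣ M → (g * (τ p.1 * upperUnip p.2)⁻¹ ∈ Gamma0 M ↔
      (p.1 : ℤ) ∣ g 1 1 - p.2 * g 1 0 ∧ ((M / p.1 : ℕ) : ℤ) ∣ g 1 0) := by
    intro p hp
    obtain ⟨hW, hI⟩ := hτ p.1 hp
    have hcop : p.1.Coprime (M / p.1) :=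
      Nat.coprime_of_squarefree_mul (by rwa [Nat.mul_div_cancel' hp])
    simpa only [Nat.mul_div_cancel' hp] using mul_inv_mem_Gamma0_iff hcop hW hI g p.2
  exact (existsUnique_congr fun p => and_congr_right fun hp => and_congr_right fun _ =>
    hmem p hp).2 (existsUnique_divisor_residue hsq (SpecialLinearGroup.isCoprime_row g 1))

/-- Let `M` be a squarefree positive integer and `Γ = Γ₀(M)`.  Given elements
`τ_d ∈ SL₂(ℤ)` (for `d ∣ M`) with `τ_d ≡ [[0,1],[-1,0]] mod d` and `τ_d ≡ 1 mod M/d`,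
the matrices `τ_d · n(j)`, for `d ∣ M` and `0 ≤ j < d`, form a complete set of
representatives for the right cosets `Γ₀(M) \ SL₂(ℤ)`. -/
theorem gamma0_coset_reps (M : ℕ) (hM : 0 < M) (hsq : Squarefree M)
    (τ : ℕ → SL(2, ℤ)) (hτ : ∀ d : ℕ, d ∣ M → CongW (τ d) d ∧ CongId (τ d) (M / d)) :
    ∀ g : SL(2, ℤ), ∃! p : ℕ × ℕ,
      p.1 ∣ M ∧ p.2 < p.1 ∧ g * (τ p.1 * upperUnip p.2)⁻¹ ∈ Gamma0 M :=
  gamma0_coset_reps_general M hsq τ hτ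
end

section
/- Let f(z) = Σ_{n≥1} a_n e^{2πinz} be a holomorphic cusp form of weight k on a lattice Γ containing [[1,1],[0,1]], and let δ_k = (−4π)·(1/(2πi))(∂/∂z + k/(2iy)) be the Shimura–Maass raising operator. Then for every ℓ ≥ 0 the ℓ-fold Shimura–Maass derivative has the expansion δ^ℓ f(z) = y^{−ℓ} ℓ! Σ_{n≥1} L_ℓ^{(k−1)}(4πny) a_n e^{2πinz}, where L_ℓ^{(k−1)} is the generalized Laguerre polynomial. -/
open Complex Real Function

/-- The Cauchy–Riemann operator `∂/∂z = (∂/∂x - i ∂/∂y)/2` applied to a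
(not necessarily holomorphic) function `g : ℂ → ℂ`. -/
noncomputable def dz (g : ℂ → ℂ) (p : ℂ) : ℂ :=
  (fderiv ℝ g p 1 - Complex.I * fderiv ℝ g p Complex.I) / 2

/-- The Shimura–Maass raising operator of weight `k`:
`δ_k = (-4π) (1/(2πi)) (∂/∂z + k/(2iy)) = 2i (∂/∂z + k/(2iy))`. -/
noncomputable def shimuraMaass (k : ℂ) (g : ℂ → ℂ) : ℂ → ℂ :=
  fun z => 2 * Complex.I * (dz g z + k / (2 * Complex.I * (z.im : ℂ)) * g z)

/-- `δ^ℓ = δ_{k+2ℓ-2} ∘ ⋯ ∘ δ_{k+2} ∘ δ_k`, the iterated Shimura–Maass derivative. -/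
noncomputable def iterSM (k : ℕ) : ℕ → (ℂ → ℂ) → (ℂ → ℂ)
  | 0, g => g
  | (ℓ + 1), g => shimuraMaass ((k : ℂ) + 2 * ℓ) (iterSM k ℓ g)

/-- The generalized Laguerre polynomial
`L_ℓ^{(α)}(x) = Σ_{i=0}^{ℓ} ((-x)^i / i!) C(ℓ+α, ℓ-i)`. -/
noncomputable def laguerre (ℓ α : ℕ) (x : ℂ) : ℂ :=
  ∑ i ∈ Finset.range (ℓ + 1), ((-x) ^ i / (i.factorial : ℂ)) * (Nat.choose (ℓ + α) (ℓ - i) : ℂ)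

/-!
Write `f = Σ bₙ qⁿ⁺¹` and `Hᵢ = Σ (n+1)ⁱ bₙ qⁿ⁺¹`, so that `Hᵢ' = 2πi Hᵢ₊₁`. Since `∂y/∂z = -i/2`,
on `yᵐ h` with `h` holomorphic the raising operator acts by
`δ_κ (yᵐ h) = 2i yᵐ h' + (m + κ) yᵐ⁻¹ h`.
Hence `δ^ℓ f = Σᵢ cₗᵢ yⁱ⁻ˡ Hᵢ` by induction on `ℓ`, the coefficients obeying
`cₗ₊₁,ᵢ₊₁ = -4π cₗᵢ + (ℓ + k + i + 1) cₗ,ᵢ₊₁`; this recurrence is a Pascal-type identity for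
`cₗᵢ = ℓ! (-4π)ⁱ / i! · C(ℓ+k-1, k-1+i)`. Expanding each `Hᵢ` and summing over `i` first
produces `ℓ! L_ℓ^{(k-1)}(4π(n+1)y)` in front of `bₙ qⁿ⁺¹`.
-/

section Wirtinger

theorem dz_of_hasDerivAt {h : ℂ → ℂ} {d z : ℂ} (hh : HasDerivAt h d z) : dz h z = d := by
  rw [dz, (hh.hasFDerivAt.restrictScalars ℝ).fderiv]
  simp only [ContinuousLinearMap.coe_restrictScalars', ContinuousLinearMap.toSpanSingleton_apply,
    smul_eq_mul]
  linear_combination (-d / 2) * I_mul_I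

theorem dz_fun_mul {g h : ℂ → ℂ} {z : ℂ} (hg : DifferentiableAt ℝ g z)
    (hh : DifferentiableAt ℝ h z) :
    dz (fun w => g w * h w) z = dz g z * h z + g z * dz h z := by
  simp only [dz, fderiv_fun_mul hg hh, add_apply, smul_apply, smul_eq_mul]
  ring

theorem dz_fun_sum {ι : Type*} (s : Finset ι) {g : ι → ℂ → ℂ} {z : ℂ}
    (hg : ∀ i ∈ s, DifferentiableAt ℝ (g i) z) :
    dz (fun w => ∑ i ∈ s, g i w) z = ∑ i ∈ s, dz (g i) z := by
  simp only [dz, fderiv_fun_sum hg, FunLike.coe_sum, Finset.sum_apply,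
    Finset.mul_sum, ← Finset.sum_sub_distrib, Finset.sum_div]

theorem hasFDerivAt_ofReal_im_zpow (m : ℤ) {z : ℂ} (hz : z.im ≠ 0) :
    HasFDerivAt (fun w : ℂ => (w.im : ℂ) ^ m)
      (((m : ℂ) * (z.im : ℂ) ^ (m - 1)) • (ofRealCLM.comp imCLM)) z :=
  (hasDerivAt_zpow m _ (.inl (ofReal_ne_zero.mpr hz))).comp_hasFDerivAt (h₂ := (· ^ m)) z
    (ofRealCLM.comp imCLM).hasFDerivAt

theorem dz_ofReal_im_zpow (m : ℤ) {z : ℂ} (hz : z.im ≠ 0) :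
    dz (fun w : ℂ => (w.im : ℂ) ^ m) z = -I * m * (z.im : ℂ) ^ (m - 1) / 2 := by
  rw [dz, (hasFDerivAt_ofReal_im_zpow m hz).fderiv]
  simp only [smul_apply, ContinuousLinearMap.comp_apply, imCLM_apply, ofRealCLM_apply, one_im,
    I_im, ofReal_zero, ofReal_one, smul_eq_mul]
  ring

theorem shimuraMaass_fun_sum {ι : Type*} (κ : ℂ) (s : Finset ι) {g : ι → ℂ → ℂ} {z : ℂ}
    (hg : ∀ i ∈ s, DifferentiableAt ℝ (g i) z) :
    shimuraMaass κ (fun w => ∑ i ∈ s, g i w) z = ∑ i ∈ s, shimuraMaass κ (g i) z := by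
  simp only [shimuraMaass, dz_fun_sum s hg, Finset.mul_sum, ← Finset.sum_add_distrib, mul_add]

theorem shimuraMaass_ofReal_im_zpow_mul (κ : ℂ) (m : ℤ) {h : ℂ → ℂ} {d z : ℂ} (hz : z.im ≠ 0)
    (hh : HasDerivAt h d z) :
    shimuraMaass κ (fun w => (w.im : ℂ) ^ m * h w) z
      = 2 * I * (z.im : ℂ) ^ m * d + (m + κ) * (z.im : ℂ) ^ (m - 1) * h z := by
  have hy : (z.im : ℂ) ≠ 0 := ofReal_ne_zero.mpr hz
  simp only [shimuraMaass, dz_fun_mul (hasFDerivAt_ofReal_im_zpow m hz).differentiableAt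
    (hh.differentiableAt.restrictScalars ℝ), dz_ofReal_im_zpow m hz, dz_of_hasDerivAt hh,
    zpow_sub_one₀ hy]
  field_simp
  linear_combination (-(m * h z)) * I_mul_I

theorem Filter.EventuallyEq.shimuraMaass_eq {g₁ g₂ : ℂ → ℂ} {z : ℂ} (h : g₁ =ᶠ[nhds z] g₂)
    (κ : ℂ) : shimuraMaass κ g₁ z = shimuraMaass κ g₂ z := by
  simp only [shimuraMaass, dz, h.fderiv_eq, h.eq_of_nhds]

end Wirtinger

section QSeries

noncomputable def qSeries (b : ℕ → ℂ) (z : ℂ) : ℂ :=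
  ∑' n : ℕ, b n * cexp (2 * π * I * ((n : ℂ) + 1) * z)

def PolyGrowth (b : ℕ → ℂ) : Prop :=
  ∃ C : ℝ, ∃ m : ℕ, ∀ n, ‖b n‖ ≤ C * ((n : ℝ) + 1) ^ m

variable {b : ℕ → ℂ}

theorem PolyGrowth.succ_pow_mul (hb : PolyGrowth b) (j : ℕ) :
    PolyGrowth fun n => ((n : ℂ) + 1) ^ j * b n := by
  obtain ⟨C, m, hC⟩ := hb
  refine ⟨C, j + m, fun n => ?_⟩
  have hn : ‖(n : ℂ) + 1‖ = (n : ℝ) + 1 := by exact_mod_cast Complex.norm_natCast (n + 1)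
  calc ‖((n : ℂ) + 1) ^ j * b n‖ = ((n : ℝ) + 1) ^ j * ‖b n‖ := by rw [norm_mul, norm_pow, hn]
    _ ≤ ((n : ℝ) + 1) ^ j * (C * ((n : ℝ) + 1) ^ m) := by gcongr; exact hC n
    _ = C * ((n : ℝ) + 1) ^ (j + m) := by ring

theorem PolyGrowth.succ_mul (hb : PolyGrowth b) : PolyGrowth fun n => ((n : ℂ) + 1) * b n := by
  simpa using hb.succ_pow_mul 1

theorem PolyGrowth.const_mul (hb : PolyGrowth b) (c : ℂ) : PolyGrowth fun n => c * b n := by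
  obtain ⟨C, m, hC⟩ := hb
  refine ⟨‖c‖ * C, m, fun n => ?_⟩
  rw [norm_mul, mul_assoc]
  gcongr
  exact hC n

theorem norm_cexp_two_pi_I_mul (n : ℕ) (z : ℂ) :
    ‖cexp (2 * π * I * ((n : ℂ) + 1) * z)‖ = rexp (-(2 * π * z.im)) ^ (n + 1) := by
  rw [Complex.norm_exp, ← Real.exp_nat_mul]
  congr 1
  rw [show 2 * π * I * ((n : ℂ) + 1) * z = ((2 * π * (n + 1) : ℝ) : ℂ) * (I * z) by push_cast; ring,
    re_ofReal_mul, I_mul_re]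
  push_cast
  ring

theorem PolyGrowth.exists_summable_bound (hb : PolyGrowth b) {y₀ : ℝ} (hy₀ : 0 < y₀) :
    ∃ u : ℕ → ℝ, Summable u ∧
      ∀ n w, y₀ ≤ w.im → ‖b n * cexp (2 * π * I * ((n : ℂ) + 1) * w)‖ ≤ u n := by
  obtain ⟨C, m, hC⟩ := hb
  set r := rexp (-(2 * π * y₀))
  have hr : ‖r‖ < 1 := by
    rw [Real.norm_of_nonneg (Real.exp_pos _).le, Real.exp_lt_one_iff]
    have := Real.pi_pos
    linarith [mul_pos (mul_pos two_pos this) hy₀]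
  refine ⟨fun n => C * (((n : ℝ) + 1) ^ m * r ^ (n + 1)), ?_, fun n w hw => ?_⟩
  · refine Summable.mul_left C ?_
    have hs : Summable fun n : ℕ => (n : ℝ) ^ m * r ^ n :=
      summable_pow_mul_geometric_of_norm_lt_one m hr
    refine ((summable_nat_add_iff 1).mpr hs).congr fun n => ?_
    push_cast
    ring
  · have hq : ‖cexp (2 * π * I * ((n : ℂ) + 1) * w)‖ ≤ r ^ (n + 1) := by
      rw [norm_cexp_two_pi_I_mul]
      have hexp : rexp (-(2 * π * w.im)) ≤ r := Real.exp_le_exp.mpr (by nlinarith [Real.pi_pos])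
      exact pow_le_pow_left₀ (Real.exp_pos _).le hexp _
    calc ‖b n * cexp (2 * π * I * ((n : ℂ) + 1) * w)‖
        ≤ C * ((n : ℝ) + 1) ^ m * r ^ (n + 1) := by
          rw [norm_mul]
          exact mul_le_mul (hC n) hq (norm_nonneg _) (le_trans (norm_nonneg _) (hC n))
      _ = C * (((n : ℝ) + 1) ^ m * r ^ (n + 1)) := by ring

theorem PolyGrowth.summable_qSeries (hb : PolyGrowth b) {z : ℂ} (hz : 0 < z.im) :
    Summable fun n => b n * cexp (2 * π * I * ((n : ℂ) + 1) * z) := by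
  obtain ⟨u, hu, hbu⟩ := hb.exists_summable_bound hz
  exact hu.of_norm_bounded fun n => hbu n z le_rfl

theorem hasDerivAt_mul_cexp_two_pi_I_mul (c : ℂ) (n : ℕ) (w : ℂ) :
    HasDerivAt (fun w => c * cexp (2 * π * I * ((n : ℂ) + 1) * w))
      (2 * π * I * (((n : ℂ) + 1) * c) * cexp (2 * π * I * ((n : ℂ) + 1) * w)) w := by
  have h := (((hasDerivAt_id' w).const_mul (2 * π * I * ((n : ℂ) + 1))).cexp).const_mul c
  exact h.congr_deriv (by ring)

theorem PolyGrowth.hasDerivAt_qSeries (hb : PolyGrowth b) {z : ℂ} (hz : 0 < z.im) :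
    HasDerivAt (qSeries b) (2 * π * I * qSeries (fun n => ((n : ℂ) + 1) * b n) z) z := by
  obtain ⟨u, hu, hbu⟩ := (hb.succ_mul.const_mul (2 * π * I)).exists_summable_bound (half_pos hz)
  have hmem : z ∈ {w : ℂ | z.im / 2 < w.im} := half_lt_self hz
  have hderiv := hasDerivAt_tsum_of_isPreconnected hu
    (isOpen_lt continuous_const Complex.continuous_im) (convex_halfSpace_im_gt _).isPreconnected
    (fun n w _ => hasDerivAt_mul_cexp_two_pi_I_mul (b n) n w)
    (fun n w hw => hbu n w (le_of_lt hw)) hmem (hb.summable_qSeries hz) hmem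
  have hsum : 2 * π * I * qSeries (fun n => ((n : ℂ) + 1) * b n) z
      = ∑' n : ℕ, 2 * π * I * (((n : ℂ) + 1) * b n) * cexp (2 * π * I * ((n : ℂ) + 1) * z) := by
    rw [qSeries, ← tsum_mul_left]
    exact tsum_congr fun n => by ring
  rw [hsum]
  exact hderiv

end QSeries

section LaguerreCoeff

theorem add_one_mul_choose_add_one_add_one (ℓ α i : ℕ) :
    (ℓ + 1) * (ℓ + α + 1).choose (α + i + 1)
      = (i + 1) * (ℓ + α).choose (α + i) + (ℓ + α + i + 2) * (ℓ + α).choose (α + i + 1) := by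
  rcases le_or_gt i ℓ with hi | hi
  · obtain ⟨d, rfl⟩ := Nat.exists_eq_add_of_le hi
    have hpascal := Nat.choose_succ_succ' (i + d + α) (α + i)
    have hratio := Nat.choose_succ_right_eq (i + d + α) (α + i)
    rw [show i + d + α - (α + i) = d by omega] at hratio
    rw [hpascal]
    zify at hratio ⊢
    linear_combination -hratio
  · simp [Nat.choose_eq_zero_of_lt, show ℓ + α < α + i by omega,
      show ℓ + α < α + i + 1 by omega, show ℓ + α + 1 < α + i + 1 by omega]

/-- Choosing `α + i` rather than `ℓ - i` (as in `laguerre`) makes the coefficient vanish for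
`i > ℓ` instead of picking up the junk value `C(ℓ+α, 0) = 1` of truncated subtraction. -/
noncomputable def laguerreCoeff (α ℓ i : ℕ) (x : ℂ) : ℂ :=
  ℓ.factorial * x ^ i / i.factorial * ((ℓ + α).choose (α + i) : ℂ)

theorem laguerreCoeff_of_lt {α ℓ i : ℕ} (h : ℓ < i) (x : ℂ) : laguerreCoeff α ℓ i x = 0 := by
  simp [laguerreCoeff, Nat.choose_eq_zero_of_lt, show ℓ + α < α + i by omega]

theorem laguerreCoeff_succ_zero (α ℓ : ℕ) (x : ℂ) :
    laguerreCoeff α (ℓ + 1) 0 x = (ℓ + α + 1) * laguerreCoeff α ℓ 0 x := by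
  have h : (((ℓ + α).choose α * (ℓ + α + 1) : ℕ) : ℂ) = ((ℓ + α + 1).choose α * (ℓ + 1) : ℕ) := by
    rw [Nat.choose_mul_succ_eq, show ℓ + α + 1 - α = ℓ + 1 by omega]
  simp only [laguerreCoeff, Nat.factorial_succ, show ℓ + 1 + α = ℓ + α + 1 by omega]
  push_cast at h ⊢
  linear_combination (-(ℓ.factorial : ℂ)) * h

theorem laguerreCoeff_succ_succ (α ℓ i : ℕ) (x : ℂ) :
    laguerreCoeff α (ℓ + 1) (i + 1) x
      = x * laguerreCoeff α ℓ i x + (ℓ + α + i + 2) * laguerreCoeff α ℓ (i + 1) x := by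
  have h : (((ℓ + 1) * (ℓ + α + 1).choose (α + i + 1) : ℕ) : ℂ)
      = ((i + 1) * (ℓ + α).choose (α + i) + (ℓ + α + i + 2) * (ℓ + α).choose (α + i + 1) : ℕ) :=
    congrArg _ (add_one_mul_choose_add_one_add_one ℓ α i)
  simp only [laguerreCoeff, Nat.factorial_succ, show ℓ + 1 + α = ℓ + α + 1 by omega,
    ← add_assoc]
  have hi : (i.factorial : ℂ) ≠ 0 := Nat.cast_ne_zero.mpr i.factorial_ne_zero
  push_cast at h ⊢
  field_simp
  linear_combination (ℓ.factorial * x ^ (i + 1) : ℂ) * h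

theorem factorial_mul_laguerre_neg_mul (ℓ α : ℕ) (x t : ℂ) :
    (ℓ.factorial : ℂ) * laguerre ℓ α (-(x * t))
      = ∑ i ∈ Finset.range (ℓ + 1), laguerreCoeff α ℓ i x * t ^ i := by
  rw [laguerre, Finset.mul_sum]
  refine Finset.sum_congr rfl fun i hi => ?_
  have hsplit : ℓ + α = ℓ - i + (α + i) := by have := Finset.mem_range.mp hi; omega
  rw [Nat.choose_symm_of_eq_add hsplit, laguerreCoeff, neg_neg, mul_pow]
  ring

end LaguerreCoeff

section MaassSeries

noncomputable def maassSeries (α : ℕ) (b : ℕ → ℂ) (ℓ : ℕ) (z : ℂ) : ℂ :=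
  ∑ i ∈ Finset.range (ℓ + 1), (z.im : ℂ) ^ ((i : ℤ) - ℓ) *
    (laguerreCoeff α ℓ i (-(4 * π)) * qSeries (fun n => ((n : ℂ) + 1) ^ i * b n) z)

variable {b : ℕ → ℂ}

theorem PolyGrowth.hasDerivAt_qSeries_succ_pow_mul (hb : PolyGrowth b) (i : ℕ) {z : ℂ}
    (hz : 0 < z.im) :
    HasDerivAt (qSeries fun n => ((n : ℂ) + 1) ^ i * b n)
      (2 * π * I * qSeries (fun n => ((n : ℂ) + 1) ^ (i + 1) * b n) z) z := by
  simpa only [← mul_assoc, ← pow_succ'] using (hb.succ_pow_mul i).hasDerivAt_qSeries hz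

theorem PolyGrowth.shimuraMaass_ofReal_im_zpow_mul_qSeries (hb : PolyGrowth b) (κ c : ℂ) (m : ℤ)
    (i : ℕ) {z : ℂ} (hz : 0 < z.im) :
    shimuraMaass κ (fun w => (w.im : ℂ) ^ m * (c * qSeries (fun n => ((n : ℂ) + 1) ^ i * b n) w)) z
      = -(4 * π) * c * ((z.im : ℂ) ^ m * qSeries (fun n => ((n : ℂ) + 1) ^ (i + 1) * b n) z)
        + (m + κ) * c * ((z.im : ℂ) ^ (m - 1) * qSeries (fun n => ((n : ℂ) + 1) ^ i * b n) z) := by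
  rw [shimuraMaass_ofReal_im_zpow_mul _ _ hz.ne'
    ((hb.hasDerivAt_qSeries_succ_pow_mul i hz).const_mul c)]
  linear_combination (4 * π * (z.im : ℂ) ^ m * c *
    qSeries (fun n => ((n : ℂ) + 1) ^ (i + 1) * b n) z) * I_mul_I

theorem PolyGrowth.shimuraMaass_maassSeries (hb : PolyGrowth b) (α ℓ : ℕ) {z : ℂ}
    (hz : 0 < z.im) :
    shimuraMaass (((α + 1 : ℕ) : ℂ) + 2 * ℓ) (maassSeries α b ℓ) z = maassSeries α b (ℓ + 1) z := by
  set c := fun i => laguerreCoeff α ℓ i (-(4 * π))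
  set H := fun i => qSeries (fun n => ((n : ℂ) + 1) ^ i * b n) z
  set T := fun j : ℕ => (z.im : ℂ) ^ ((j : ℤ) - (ℓ + 1)) * H j
  have hterm (i : ℕ) : shimuraMaass (((α + 1 : ℕ) : ℂ) + 2 * ℓ)
      (fun w => (w.im : ℂ) ^ ((i : ℤ) - ℓ) *
        (c i * qSeries (fun n => ((n : ℂ) + 1) ^ i * b n) w)) z
      = -(4 * π) * c i * T (i + 1) + (ℓ + α + i + 1) * c i * T i := by
    rw [hb.shimuraMaass_ofReal_im_zpow_mul_qSeries _ _ _ _ hz]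
    simp only [T, H]
    push_cast
    rw [show (i : ℤ) + 1 - (ℓ + 1) = i - ℓ by ring, show (i : ℤ) - ℓ - 1 = i - (ℓ + 1) by ring]
    ring
  have hdiff (i : ℕ) : DifferentiableAt ℝ (fun w => (w.im : ℂ) ^ ((i : ℤ) - ℓ) *
      (c i * qSeries (fun n => ((n : ℂ) + 1) ^ i * b n) w)) z :=
    (hasFDerivAt_ofReal_im_zpow _ hz.ne').differentiableAt.mul <|
      ((hb.hasDerivAt_qSeries_succ_pow_mul i hz).const_mul (c i)).differentiableAt.restrictScalars ℝ
  have hlast : c (ℓ + 1) = 0 := laguerreCoeff_of_lt (Nat.lt_succ_self ℓ) _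
  have hlhs : shimuraMaass (((α + 1 : ℕ) : ℂ) + 2 * ℓ) (maassSeries α b ℓ) z
      = ∑ i ∈ Finset.range (ℓ + 1), (-(4 * π) * c i * T (i + 1) + (ℓ + α + i + 1) * c i * T i) :=
    (shimuraMaass_fun_sum _ _ fun i _ => hdiff i).trans (Finset.sum_congr rfl fun i _ => hterm i)
  have hshift : ∑ i ∈ Finset.range (ℓ + 1), (ℓ + α + i + 1) * c i * T i
      = ∑ i ∈ Finset.range (ℓ + 1), (ℓ + α + (i + 1 : ℕ) + 1) * c (i + 1) * T (i + 1)
        + (ℓ + α + 1) * c 0 * T 0 := by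
    have h := Finset.sum_range_succ' (fun i => (ℓ + α + i + 1) * c i * T i) (ℓ + 1)
    rw [Finset.sum_range_succ, hlast, mul_zero, zero_mul, add_zero] at h
    simpa only [Nat.cast_zero, add_zero] using h
  rw [hlhs, Finset.sum_add_distrib, hshift, maassSeries, Finset.sum_range_succ' _ (ℓ + 1),
    ← add_assoc, ← Finset.sum_add_distrib]
  congr 1
  · refine Finset.sum_congr rfl fun i _ => ?_
    simp only [T, H, c, laguerreCoeff_succ_succ]
    push_cast
    ring
  · simp only [T, H, c, laguerreCoeff_succ_zero]
    push_cast
    ring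

theorem PolyGrowth.iterSM_eqOn_maassSeries (hb : PolyGrowth b) {α : ℕ}
    {f : ℂ → ℂ} (hf : Set.EqOn f (qSeries b) {z | 0 < z.im}) (ℓ : ℕ) :
    Set.EqOn (iterSM (α + 1) ℓ f) (maassSeries α b ℓ) {z | 0 < z.im} := by
  induction ℓ with
  | zero =>
    intro z hz
    simp [iterSM, maassSeries, laguerreCoeff, hf hz]
  | succ ℓ ih =>
    intro z hz
    have hnear : iterSM (α + 1) ℓ f =ᶠ[nhds z] maassSeries α b ℓ :=
      Filter.eventuallyEq_of_mem ((isOpen_lt continuous_const continuous_im).mem_nhds hz) ih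
    rw [iterSM, hnear.shimuraMaass_eq, hb.shimuraMaass_maassSeries α ℓ hz]

theorem PolyGrowth.maassSeries_eq_tsum_laguerre (hb : PolyGrowth b) (α ℓ : ℕ)
    {z : ℂ} (hz : 0 < z.im) :
    maassSeries α b ℓ z = (z.im : ℂ) ^ (-(ℓ : ℤ)) * (ℓ.factorial : ℂ) *
      ∑' n : ℕ, laguerre ℓ α ((4 * π * ((n : ℝ) + 1) * z.im : ℝ) : ℂ) * b n *
        cexp (2 * π * I * ((n : ℂ) + 1) * z) := by
  have hy : (z.im : ℂ) ≠ 0 := ofReal_ne_zero.mpr hz.ne'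
  have hterm (n : ℕ) : (ℓ.factorial : ℂ) * (laguerre ℓ α ((4 * π * ((n : ℝ) + 1) * z.im : ℝ) : ℂ)
      * b n * cexp (2 * π * I * ((n : ℂ) + 1) * z))
      = ∑ i ∈ Finset.range (ℓ + 1), laguerreCoeff α ℓ i (-(4 * π)) * (z.im : ℂ) ^ i *
          (((n : ℂ) + 1) ^ i * b n * cexp (2 * π * I * ((n : ℂ) + 1) * z)) := by
    rw [show ((4 * π * ((n : ℝ) + 1) * z.im : ℝ) : ℂ) = -(-(4 * π) * (((n : ℂ) + 1) * z.im)) by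
        push_cast; ring, mul_assoc, ← mul_assoc, factorial_mul_laguerre_neg_mul, Finset.sum_mul]
    exact Finset.sum_congr rfl fun i _ => by rw [mul_pow]; ring
  have hsummable (i : ℕ) := ((hb.succ_pow_mul i).summable_qSeries hz).mul_left
    (laguerreCoeff α ℓ i (-(4 * π)) * (z.im : ℂ) ^ i)
  rw [mul_assoc, ← tsum_mul_left, tsum_congr hterm, Summable.tsum_finsetSum fun i _ => hsummable i,
    maassSeries, Finset.mul_sum]
  refine Finset.sum_congr rfl fun i _ => ?_
  rw [tsum_mul_left, qSeries, ← zpow_natCast, sub_eq_neg_add, zpow_add₀ hy]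
  ring

end MaassSeries

theorem iterated_shimura_maass_fourier_general (k : ℕ) (hk : 0 < k)
    (a : ℕ → ℂ) (C : ℝ) (ha : ∀ n : ℕ, ‖a n‖ ≤ C * (n : ℝ) ^ k) (f : ℂ → ℂ)
    (hf : ∀ z : ℂ, 0 < z.im →
      f z = ∑' n : ℕ, a (n + 1) * Complex.exp (2 * Real.pi * Complex.I * ((n : ℂ) + 1) * z)) :
    ∀ ℓ : ℕ, ∀ z : ℂ, 0 < z.im →
      iterSM k ℓ f z
        = ((z.im : ℂ)) ^ (-(ℓ : ℤ)) * (ℓ.factorial : ℂ) *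
            ∑' n : ℕ, laguerre ℓ (k - 1) ((4 * Real.pi * ((n : ℝ) + 1) * z.im : ℝ) : ℂ) *
              a (n + 1) * Complex.exp (2 * Real.pi * Complex.I * ((n : ℂ) + 1) * z) := by
  intro ℓ z hz
  obtain ⟨α, rfl⟩ : ∃ α, k = α + 1 := ⟨k - 1, by omega⟩
  have hb : PolyGrowth fun n => a (n + 1) :=
    ⟨C, α + 1, fun n => by exact_mod_cast ha (n + 1)⟩
  rw [hb.iterSM_eqOn_maassSeries (fun w hw => hf w hw) ℓ hz,
    hb.maassSeries_eq_tsum_laguerre α ℓ hz, Nat.add_sub_cancel]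

/-- Let `f(z) = Σ_{n ≥ 1} a_n e^{2πinz}` be a holomorphic cusp form of weight `k`
(formalized: `f` is holomorphic on the upper half-plane with the given Fourier
expansion with coefficients of polynomial growth).  Then for every `ℓ ≥ 0`,
`δ^ℓ f(z) = y^{-ℓ} ℓ! Σ_{n ≥ 1} L_ℓ^{(k-1)}(4πny) a_n e^{2πinz}`. -/
theorem iterated_shimura_maass_fourier (k : ℕ) (hk : 0 < k) (hke : Even k)
    (a : ℕ → ℂ) (C : ℝ) (ha : ∀ n : ℕ, ‖a n‖ ≤ C * (n : ℝ) ^ k) (f : ℂ → ℂ)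
    (hol : ∀ z : ℂ, 0 < z.im → DifferentiableAt ℂ f z)
    (hf : ∀ z : ℂ, 0 < z.im →
      f z = ∑' n : ℕ, a (n + 1) * Complex.exp (2 * Real.pi * Complex.I * ((n : ℂ) + 1) * z)) :
    ∀ ℓ : ℕ, ∀ z : ℂ, 0 < z.im →
      iterSM k ℓ f z
        = ((z.im : ℂ)) ^ (-(ℓ : ℤ)) * (ℓ.factorial : ℂ) *
            ∑' n : ℕ, laguerre ℓ (k - 1) ((4 * Real.pi * ((n : ℝ) + 1) * z.im : ℝ) : ℂ) *
              a (n + 1) * Complex.exp (2 * Real.pi * Complex.I * ((n : ℂ) + 1) * z) :=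
  iterated_shimura_maass_fourier_general k hk a C ha f hf
end
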